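/- arXiv:2108.00738 — 3 statements merged into one kernel-verified Lean document; each statement's English description precedes it below -/
import Mathlib

section
/- Let X, D, N, X', Y' be random variables taking values in finite types. Assume (a) X' and N are conditionally independent given (X, D), and (b) X' and Y' are conditionally independent given (D, N). Then [I(X'; D) − I(X; D)] − [I(X'; Y') − I(X; (D, N))] ≥ 0. (Here X is the initial state of a subsystem, X' its final state, (D,N) the initial state of the previously indexed subsystems with D the part influencing X', Y' the final state of the previously indexed subsystems; the quantity on the left is the single-subsystem entropy bound term D_j = η_j − Δi_j.) -/
open scoped BigOperators

set_option linter.unusedSectionVars false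
section InfoDefs

variable {Ω : Type*} [Fintype Ω]

/-- Pushforward probability mass function: `P(X = a)` for the random variable `X`
on the finite probability space `(Ω, μ)`. -/
def prob {α : Type*} [DecidableEq α] (μ : Ω → ℝ) (X : Ω → α) (a : α) : ℝ :=
  ∑ ω, if X ω = a then μ ω else 0

/-- Shannon entropy (natural logarithm) of the random variable `X` under `μ`. -/
noncomputable def ent {α : Type*} [Fintype α] [DecidableEq α] (μ : Ω → ℝ) (X : Ω → α) : ℝ :=
  ∑ a, Real.negMulLog (prob μ X a)

/-- Conditional Shannon entropy `H(X | Y)`. -/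
noncomputable def condEnt {α β : Type*} [Fintype α] [DecidableEq α] [Fintype β] [DecidableEq β]
    (μ : Ω → ℝ) (X : Ω → α) (Y : Ω → β) : ℝ :=
  ent μ (fun ω => (X ω, Y ω)) - ent μ Y

/-- Mutual information `I(X;Y)`. -/
noncomputable def mi {α β : Type*} [Fintype α] [DecidableEq α] [Fintype β] [DecidableEq β]
    (μ : Ω → ℝ) (X : Ω → α) (Y : Ω → β) : ℝ :=
  ent μ X + ent μ Y - ent μ (fun ω => (X ω, Y ω))

/-- Conditional mutual information `I(X;Y|Z)`. -/
noncomputable def cmi {α β γ : Type*} [Fintype α] [DecidableEq α] [Fintype β] [DecidableEq β]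
    [Fintype γ] [DecidableEq γ] (μ : Ω → ℝ) (X : Ω → α) (Y : Ω → β) (Z : Ω → γ) : ℝ :=
  ent μ (fun ω => (X ω, Z ω)) + ent μ (fun ω => (Y ω, Z ω))
    - ent μ (fun ω => (X ω, Y ω, Z ω)) - ent μ Z

/-- Conditional independence of `U` and `V` given `W`:
the joint law satisfies `P(U,V,W)·P(W) = P(U,W)·P(V,W)` pointwise. -/
def CondIndep {α β γ : Type*} [DecidableEq α] [DecidableEq β] [DecidableEq γ]
    (μ : Ω → ℝ) (U : Ω → α) (V : Ω → β) (W : Ω → γ) : Prop :=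
  ∀ u v w, prob μ (fun ω => (U ω, V ω, W ω)) (u, v, w) * prob μ W w
    = prob μ (fun ω => (U ω, W ω)) (u, w) * prob μ (fun ω => (V ω, W ω)) (v, w)

/-- The tuple `(A_0, …, A_{n-1})` of the first `n` members of a family of random
variables, viewed as a single random variable valued in a (dependent) product type. -/
def tup {α : ℕ → Type*} (A : (i : ℕ) → Ω → α i) (n : ℕ) : Ω → ((i : Fin n) → α i.1) :=
  fun ω i => A i.1 ω

/-- The restriction `(A_i)_{i ∈ s}` of a family of random variables to a finite index
set `s`, viewed as a single random variable (a one-point constant if `s = ∅`). -/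
def restrict {α : ℕ → Type*} (A : (i : ℕ) → Ω → α i) (s : Finset ℕ) :
    Ω → ((i : s) → α i.1) :=
  fun ω i => A i.1 ω

end InfoDefs


section Aux

variable {Ω : Type*} [Fintype Ω]

lemma prob_nonneg {α : Type*} [DecidableEq α] {μ : Ω → ℝ} (hμ0 : ∀ ω, 0 ≤ μ ω)
    (X : Ω → α) (a : α) : 0 ≤ prob μ X a := by
  apply Finset.sum_nonneg; intro ω _; split <;> simp [hμ0 ω]

lemma prob_total {α : Type*} [Fintype α] [DecidableEq α] {μ : Ω → ℝ} (hμ1 : ∑ ω, μ ω = 1)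
    (X : Ω → α) : ∑ a, prob μ X a = 1 := by
  unfold prob
  rw [Finset.sum_comm, ← hμ1]
  exact Finset.sum_congr rfl fun ω _ => by simp

lemma prob_comp_inj {α β : Type*} [DecidableEq α] [DecidableEq β] (μ : Ω → ℝ)
    (X : Ω → α) {f : α → β} (hf : Function.Injective f) (a : α) :
    prob μ (fun ω => f (X ω)) (f a) = prob μ X a := by
  simp [prob, hf.eq_iff]

lemma ent_comp_inj {α β : Type*} [Fintype α] [DecidableEq α] [Fintype β] [DecidableEq β]
    (μ : Ω → ℝ) (X : Ω → α) {f : α → β} (hf : Function.Injective f) :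
    ent μ (fun ω => f (X ω)) = ent μ X := by
  unfold ent
  have h1 : ∀ b ∈ Finset.univ, b ∉ Finset.univ.image f →
      Real.negMulLog (prob μ (fun ω => f (X ω)) b) = 0 := by
    intro b _ hb
    have : prob μ (fun ω => f (X ω)) b = 0 := by
      apply Finset.sum_eq_zero; intro ω _; rw [if_neg]
      intro h; exact hb (Finset.mem_image.2 ⟨X ω, Finset.mem_univ _, h⟩)
    simp [this]
  rw [← Finset.sum_subset (Finset.subset_univ _) h1,
    Finset.sum_image (fun x _ y _ h => hf h)]
  exact Finset.sum_congr rfl fun a _ => by rw [prob_comp_inj μ X hf a]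

lemma sum_comm3 {A B C M : Type*} [Fintype A] [Fintype B] [Fintype C] [AddCommMonoid M]
    (f : A → B → C → M) :
    ∑ x, ∑ y, ∑ z, f x y z = ∑ z, ∑ x, ∑ y, f x y z := by
  trans ∑ x, ∑ z, ∑ y, f x y z
  · exact Finset.sum_congr rfl fun x _ => Finset.sum_comm
  · exact Finset.sum_comm

lemma sum_comm3' {A B C M : Type*} [Fintype A] [Fintype B] [Fintype C] [AddCommMonoid M]
    (f : A → B → C → M) :
    ∑ x, ∑ y, ∑ z, f x y z = ∑ y, ∑ z, ∑ x, f x y z := by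
  trans ∑ y, ∑ x, ∑ z, f x y z
  · exact Finset.sum_comm
  · exact Finset.sum_congr rfl fun y _ => Finset.sum_comm

lemma log_term_ge (p a b c : ℝ) (hp : 0 ≤ p) (hpa : p ≤ a) (hpb : p ≤ b) (hpc : p ≤ c)
    (ha : 0 ≤ a) (hb : 0 ≤ b) (hc : 0 ≤ c) :
    p - a * b / c ≤ p * (Real.log p + Real.log c - Real.log a - Real.log b) := by
  rcases hp.eq_or_lt with h | h
  · rw [← h]
    have : 0 ≤ a * b / c := div_nonneg (mul_nonneg ha hb) hc
    simp
    linarith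
  · have ha' : 0 < a := lt_of_lt_of_le h hpa
    have hb' : 0 < b := lt_of_lt_of_le h hpb
    have hc' : 0 < c := lt_of_lt_of_le h hpc
    have hx : 0 < a * b / (p * c) := by positivity
    have h1 := Real.log_le_sub_one_of_pos hx
    rw [Real.log_div (by positivity) (by positivity),
      Real.log_mul (ne_of_gt ha') (ne_of_gt hb'),
      Real.log_mul (ne_of_gt h) (ne_of_gt hc')] at h1
    have h2 := mul_le_mul_of_nonneg_left h1 h.le
    have key : p * (a * b / (p * c) - 1) = a * b / c - p := by
      field_simp
    have h3 : p * (Real.log p + Real.log c - Real.log a - Real.log b)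
        = -(p * (Real.log a + Real.log b - (Real.log p + Real.log c))) := by ring
    linarith [h2, key, h3]

section CMI
variable {α β γ : Type*} [Fintype α] [DecidableEq α] [Fintype β] [DecidableEq β]
    [Fintype γ] [DecidableEq γ] {μ : Ω → ℝ}
    (U : Ω → α) (V : Ω → β) (W : Ω → γ)

lemma prob_marg13 (x : α) (z : γ) :
    prob μ (fun ω => (U ω, W ω)) (x, z)
      = ∑ y, prob μ (fun ω => (U ω, V ω, W ω)) (x, y, z) := by
  unfold prob
  rw [Finset.sum_comm]
  refine Finset.sum_congr rfl fun ω _ => ?_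
  simp [Prod.ext_iff, ite_and, Finset.sum_ite_eq]

lemma prob_marg23 (y : β) (z : γ) :
    prob μ (fun ω => (V ω, W ω)) (y, z)
      = ∑ x, prob μ (fun ω => (U ω, V ω, W ω)) (x, y, z) := by
  unfold prob
  rw [Finset.sum_comm]
  refine Finset.sum_congr rfl fun ω _ => ?_
  simp [Prod.ext_iff, ite_and, Finset.sum_ite_eq]

lemma prob_margW (z : γ) :
    prob μ W z = ∑ x, ∑ y, prob μ (fun ω => (U ω, V ω, W ω)) (x, y, z) := by
  unfold prob
  rw [sum_comm3]
  refine Finset.sum_congr rfl fun ω _ => ?_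
  simp [Prod.ext_iff, ite_and, Finset.sum_ite_eq]

lemma cmi_eq_sum :
    cmi μ U V W = ∑ x, ∑ y, ∑ z,
      prob μ (fun ω => (U ω, V ω, W ω)) (x, y, z) *
        (Real.log (prob μ (fun ω => (U ω, V ω, W ω)) (x, y, z)) + Real.log (prob μ W z)
          - Real.log (prob μ (fun ω => (U ω, W ω)) (x, z))
          - Real.log (prob μ (fun ω => (V ω, W ω)) (y, z))) := by
  have h123 : ent μ (fun ω => (U ω, V ω, W ω))
      = ∑ x, ∑ y, ∑ z, -(prob μ (fun ω => (U ω, V ω, W ω)) (x, y, z)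
          * Real.log (prob μ (fun ω => (U ω, V ω, W ω)) (x, y, z))) := by
    unfold ent
    simp only [Fintype.sum_prod_type, Real.negMulLog, neg_mul]
  have h13 : ent μ (fun ω => (U ω, W ω))
      = ∑ x, ∑ y, ∑ z, -(prob μ (fun ω => (U ω, V ω, W ω)) (x, y, z)
          * Real.log (prob μ (fun ω => (U ω, W ω)) (x, z))) := by
    unfold ent
    rw [Fintype.sum_prod_type]
    refine Finset.sum_congr rfl fun x _ => ?_
    refine (Finset.sum_congr rfl fun z _ => ?_).trans Finset.sum_comm
    rw [Real.negMulLog, neg_mul]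
    conv_lhs => enter [1, 1]; rw [prob_marg13 U V W x z]
    rw [Finset.sum_mul, ← Finset.sum_neg_distrib]
  have h23 : ent μ (fun ω => (V ω, W ω))
      = ∑ x, ∑ y, ∑ z, -(prob μ (fun ω => (U ω, V ω, W ω)) (x, y, z)
          * Real.log (prob μ (fun ω => (V ω, W ω)) (y, z))) := by
    unfold ent
    rw [Fintype.sum_prod_type, sum_comm3']
    refine Finset.sum_congr rfl fun y _ => Finset.sum_congr rfl fun z _ => ?_
    rw [Real.negMulLog, neg_mul]
    conv_lhs => enter [1, 1]; rw [prob_marg23 U V W y z]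
    rw [Finset.sum_mul, ← Finset.sum_neg_distrib]
  have hW : ent μ W
      = ∑ x, ∑ y, ∑ z, -(prob μ (fun ω => (U ω, V ω, W ω)) (x, y, z)
          * Real.log (prob μ W z)) := by
    unfold ent
    rw [sum_comm3]
    refine Finset.sum_congr rfl fun z _ => ?_
    rw [Real.negMulLog, neg_mul]
    conv_lhs => enter [1, 1]; rw [prob_margW U V W z]
    simp only [Finset.sum_mul, ← Finset.sum_neg_distrib]
  unfold cmi
  rw [h123, h13, h23, hW]
  simp only [← Finset.sum_add_distrib, ← Finset.sum_sub_distrib]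
  exact Finset.sum_congr rfl fun x _ => Finset.sum_congr rfl fun y _ =>
    Finset.sum_congr rfl fun z _ => by ring

lemma prob_le_13 (hμ0 : ∀ ω, 0 ≤ μ ω) (x : α) (y : β) (z : γ) :
    prob μ (fun ω => (U ω, V ω, W ω)) (x, y, z) ≤ prob μ (fun ω => (U ω, W ω)) (x, z) := by
  rw [prob_marg13 U V W x z]
  exact Finset.single_le_sum (f := fun y' => prob μ (fun ω => (U ω, V ω, W ω)) (x, y', z))
    (fun i _ => prob_nonneg hμ0 _ _) (Finset.mem_univ y)

lemma prob_le_23 (hμ0 : ∀ ω, 0 ≤ μ ω) (x : α) (y : β) (z : γ) :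
    prob μ (fun ω => (U ω, V ω, W ω)) (x, y, z) ≤ prob μ (fun ω => (V ω, W ω)) (y, z) := by
  rw [prob_marg23 U V W y z]
  exact Finset.single_le_sum (f := fun x' => prob μ (fun ω => (U ω, V ω, W ω)) (x', y, z))
    (fun i _ => prob_nonneg hμ0 _ _) (Finset.mem_univ x)

lemma prob_le_W (hμ0 : ∀ ω, 0 ≤ μ ω) (x : α) (y : β) (z : γ) :
    prob μ (fun ω => (U ω, V ω, W ω)) (x, y, z) ≤ prob μ W z := by
  rw [prob_margW U V W z]
  calc prob μ (fun ω => (U ω, V ω, W ω)) (x, y, z)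
      ≤ ∑ y', prob μ (fun ω => (U ω, V ω, W ω)) (x, y', z) :=
        Finset.single_le_sum (f := fun y' => prob μ (fun ω => (U ω, V ω, W ω)) (x, y', z))
          (fun i _ => prob_nonneg hμ0 _ _) (Finset.mem_univ y)
    _ ≤ _ := Finset.single_le_sum
        (f := fun x' => ∑ y', prob μ (fun ω => (U ω, V ω, W ω)) (x', y', z))
        (fun i _ => Finset.sum_nonneg fun j _ => prob_nonneg hμ0 _ _) (Finset.mem_univ x)

lemma sum_prod_div_eq (z : γ) :
    ∑ x, ∑ y, prob μ (fun ω => (U ω, W ω)) (x, z) * prob μ (fun ω => (V ω, W ω)) (y, z)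
        / prob μ W z = prob μ W z := by
  have hx : ∑ x, prob μ (fun ω => (U ω, W ω)) (x, z) = prob μ W z := by
    rw [prob_margW U V W z]
    exact Finset.sum_congr rfl fun x _ => prob_marg13 U V W x z
  have hy : ∑ y, prob μ (fun ω => (V ω, W ω)) (y, z) = prob μ W z := by
    rw [prob_margW U V W z, Finset.sum_comm]
    exact Finset.sum_congr rfl fun y _ => prob_marg23 U V W y z
  calc ∑ x, ∑ y, prob μ (fun ω => (U ω, W ω)) (x, z) * prob μ (fun ω => (V ω, W ω)) (y, z)
        / prob μ W z
      = (∑ x, prob μ (fun ω => (U ω, W ω)) (x, z))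
          * (∑ y, prob μ (fun ω => (V ω, W ω)) (y, z)) / prob μ W z := by
        rw [Finset.sum_mul_sum]
        simp only [Finset.sum_div]
    _ = prob μ W z := by rw [hx, hy, mul_self_div_self]

lemma triple_total (hμ1 : ∑ ω, μ ω = 1) :
    ∑ x, ∑ y, ∑ z, prob μ (fun ω => (U ω, V ω, W ω)) (x, y, z) = 1 := by
  have := prob_total hμ1 (fun ω => (U ω, V ω, W ω))
  simpa only [Fintype.sum_prod_type] using this

lemma cmi_nonneg (hμ0 : ∀ ω, 0 ≤ μ ω) (hμ1 : ∑ ω, μ ω = 1) : 0 ≤ cmi μ U V W := by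
  rw [cmi_eq_sum]
  have hS : ∑ x, ∑ y, ∑ z, (prob μ (fun ω => (U ω, V ω, W ω)) (x, y, z)
      - prob μ (fun ω => (U ω, W ω)) (x, z) * prob μ (fun ω => (V ω, W ω)) (y, z)
        / prob μ W z) = 0 := by
    simp only [Finset.sum_sub_distrib]
    rw [triple_total U V W hμ1]
    have : ∑ x, ∑ y, ∑ z, prob μ (fun ω => (U ω, W ω)) (x, z)
        * prob μ (fun ω => (V ω, W ω)) (y, z) / prob μ W z = 1 := by
      rw [sum_comm3]
      rw [show ∑ z, ∑ x, ∑ y, prob μ (fun ω => (U ω, W ω)) (x, z)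
          * prob μ (fun ω => (V ω, W ω)) (y, z) / prob μ W z = ∑ z, prob μ W z from
        Finset.sum_congr rfl fun z _ => sum_prod_div_eq U V W z]
      exact prob_total hμ1 W
    rw [this]
    ring
  rw [← hS]
  refine Finset.sum_le_sum fun x _ => Finset.sum_le_sum fun y _ =>
    Finset.sum_le_sum fun z _ => ?_
  exact log_term_ge _ _ _ _ (prob_nonneg hμ0 _ _) (prob_le_13 U V W hμ0 x y z)
    (prob_le_23 U V W hμ0 x y z) (prob_le_W U V W hμ0 x y z)
    (prob_nonneg hμ0 _ _) (prob_nonneg hμ0 _ _) (prob_nonneg hμ0 _ _)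

lemma cmi_eq_zero (hμ0 : ∀ ω, 0 ≤ μ ω) (h : CondIndep μ U V W) : cmi μ U V W = 0 := by
  rw [cmi_eq_sum]
  refine Finset.sum_eq_zero fun x _ => Finset.sum_eq_zero fun y _ =>
    Finset.sum_eq_zero fun z _ => ?_
  rcases (prob_nonneg hμ0 (fun ω => (U ω, V ω, W ω)) (x, y, z)).eq_or_lt with hp | hp
  · rw [← hp, zero_mul]
  · have hW : 0 < prob μ W z := lt_of_lt_of_le hp (prob_le_W U V W hμ0 x y z)
    have h13 : 0 < prob μ (fun ω => (U ω, W ω)) (x, z) :=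
      lt_of_lt_of_le hp (prob_le_13 U V W hμ0 x y z)
    have h23 : 0 < prob μ (fun ω => (V ω, W ω)) (y, z) :=
      lt_of_lt_of_le hp (prob_le_23 U V W hμ0 x y z)
    have hlog : Real.log (prob μ (fun ω => (U ω, V ω, W ω)) (x, y, z)) + Real.log (prob μ W z)
        - Real.log (prob μ (fun ω => (U ω, W ω)) (x, z))
        - Real.log (prob μ (fun ω => (V ω, W ω)) (y, z)) = 0 := by
      rw [← Real.log_mul (ne_of_gt hp) (ne_of_gt hW), h x y z,
        Real.log_mul (ne_of_gt h13) (ne_of_gt h23)]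
      ring
    rw [hlog, mul_zero]

end CMI

end Aux

/-- Positivity of the single-subsystem bound `D_j = η_j − Δi_j`:
if (a) `X' ⊥ N | (X,D)` and (b) `X' ⊥ Y' | (D,N)`, then
`[I(X';D) − I(X;D)] − [I(X';Y') − I(X;(D,N))] ≥ 0`. -/
theorem statement5 {Ω : Type*} [Fintype Ω] (μ : Ω → ℝ)
    (hμ0 : ∀ ω, 0 ≤ μ ω) (hμ1 : ∑ ω, μ ω = 1)
    {α α' β δ ν : Type*} [Fintype α] [DecidableEq α] [Fintype α'] [DecidableEq α']
    [Fintype β] [DecidableEq β] [Fintype δ] [DecidableEq δ] [Fintype ν] [DecidableEq ν]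
    (X : Ω → α) (D : Ω → δ) (N : Ω → ν) (X' : Ω → α') (Y' : Ω → β)
    (ha : CondIndep μ X' N (fun ω => (X ω, D ω)))
    (hb : CondIndep μ X' Y' (fun ω => (D ω, N ω))) :
    (mi μ X' D - mi μ X D) - (mi μ X' Y' - mi μ X (fun ω => (D ω, N ω))) ≥ 0 := by
  have hC1 : 0 ≤ cmi μ X' (fun ω => (D ω, N ω)) Y' := cmi_nonneg _ _ _ hμ0 hμ1
  have hC2 : 0 ≤ cmi μ X N (fun ω => (X' ω, D ω)) := cmi_nonneg _ _ _ hμ0 hμ1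
  have hC3 : cmi μ X' Y' (fun ω => (D ω, N ω)) = 0 := cmi_eq_zero _ _ _ hμ0 hb
  have hC4 : cmi μ X' N (fun ω => (X ω, D ω)) = 0 := cmi_eq_zero _ _ _ hμ0 ha
  have E1 : ent μ (fun ω => ((D ω, N ω), Y' ω)) = ent μ (fun ω => (Y' ω, (D ω, N ω))) := by
    have := ent_comp_inj μ (fun ω => (Y' ω, (D ω, N ω)))
      (f := Prod.swap) Prod.swap_injective
    exact this
  have E2 : ent μ (fun ω => (X' ω, (D ω, N ω), Y' ω))
      = ent μ (fun ω => (X' ω, Y' ω, (D ω, N ω))) := by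
    have := ent_comp_inj μ (fun ω => (X' ω, Y' ω, (D ω, N ω)))
      (f := fun p => (p.1, p.2.2, p.2.1))
      (fun p q h => by
        obtain ⟨a, b, c⟩ := p; obtain ⟨a', b', c'⟩ := q
        simp only [Prod.mk.injEq] at h ⊢; tauto)
    exact this
  have E3 : ent μ (fun ω => (X ω, X' ω, D ω)) = ent μ (fun ω => (X' ω, X ω, D ω)) := by
    have := ent_comp_inj μ (fun ω => (X' ω, X ω, D ω))
      (f := fun p => (p.2.1, p.1, p.2.2))
      (fun p q h => by
        obtain ⟨a, b, c⟩ := p; obtain ⟨a', b', c'⟩ := q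
        simp only [Prod.mk.injEq] at h ⊢; tauto)
    exact this
  have E4 : ent μ (fun ω => (X ω, N ω, X' ω, D ω))
      = ent μ (fun ω => (X' ω, N ω, X ω, D ω)) := by
    have := ent_comp_inj μ (fun ω => (X' ω, N ω, X ω, D ω))
      (f := fun p => (p.2.2.1, p.2.1, p.1, p.2.2.2))
      (fun p q h => by
        obtain ⟨a, b, c, d⟩ := p; obtain ⟨a', b', c', d'⟩ := q
        simp only [Prod.mk.injEq] at h ⊢; tauto)
    exact this
  have E5 : ent μ (fun ω => (N ω, X' ω, D ω)) = ent μ (fun ω => (X' ω, D ω, N ω)) := by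
    have := ent_comp_inj μ (fun ω => (X' ω, D ω, N ω))
      (f := fun p => (p.2.2, p.1, p.2.1))
      (fun p q h => by
        obtain ⟨a, b, c⟩ := p; obtain ⟨a', b', c'⟩ := q
        simp only [Prod.mk.injEq] at h ⊢; tauto)
    exact this
  have E6 : ent μ (fun ω => (N ω, X ω, D ω)) = ent μ (fun ω => (X ω, D ω, N ω)) := by
    have := ent_comp_inj μ (fun ω => (X ω, D ω, N ω))
      (f := fun p => (p.2.2, p.1, p.2.1))
      (fun p q h => by
        obtain ⟨a, b, c⟩ := p; obtain ⟨a', b', c'⟩ := q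
        simp only [Prod.mk.injEq] at h ⊢; tauto)
    exact this
  have key : (mi μ X' D - mi μ X D) - (mi μ X' Y' - mi μ X (fun ω => (D ω, N ω)))
      = cmi μ X' (fun ω => (D ω, N ω)) Y' + cmi μ X N (fun ω => (X' ω, D ω))
        - cmi μ X' Y' (fun ω => (D ω, N ω)) - cmi μ X' N (fun ω => (X ω, D ω)) := by
    simp only [mi, cmi]
    rw [E1, E2, E3, E4, E5, E6]
    ring
  rw [ge_iff_le, key, hC3, hC4]
  linarith
end

section
/- Let X, X', D, D' be random variables taking values in finite types such that X' and D' are conditionally independent given (X, D). Then I(X'; D) − I(X; D) = − I(X; D | X') + I(X'; D' | X) + I(X'; D | (X, D')). (This is the decomposition η_j = −a'_j + c'_j + d'_j of the term η_j.) -/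
open scoped BigOperators

section Helpers

variable {Ω : Type*} [Fintype Ω] (μ : Ω → ℝ)

lemma my_prob_nonneg {α : Type*} [DecidableEq α] (hμ0 : ∀ ω, 0 ≤ μ ω) (X : Ω → α) (a : α) :
    0 ≤ prob μ X a := by
  refine Finset.sum_nonneg fun ω _ => ?_
  split <;> simp [hμ0 ω]

lemma my_prob_congr {α β : Type*} [DecidableEq α] [DecidableEq β]
    (X : Ω → α) (Y : Ω → β) (a : α) (b : β) (h : ∀ ω, X ω = a ↔ Y ω = b) :
    prob μ X a = prob μ Y b := by
  refine Finset.sum_congr rfl fun ω _ => ?_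
  rw [if_congr (h ω) rfl rfl]

lemma my_prob_comp {τ σ : Type*} [Fintype τ] [DecidableEq τ] [DecidableEq σ]
    (f : τ → σ) (T : Ω → τ) (S : Ω → σ) (hS : ∀ ω, S ω = f (T ω)) (s : σ) :
    prob μ S s = ∑ t, if f t = s then prob μ T t else 0 := by
  simp only [prob, hS]
  rw [Finset.sum_congr rfl (fun t (_ : t ∈ Finset.univ) =>
    show (if f t = s then ∑ ω, if T ω = t then μ ω else 0 else 0)
      = ∑ ω, if f t = s then (if T ω = t then μ ω else 0) else 0 by split <;> simp)]
  rw [Finset.sum_comm]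
  refine Finset.sum_congr rfl fun ω _ => ?_
  rw [Finset.sum_eq_single (T ω)]
  · simp
  · intro t _ ht
    have : T ω ≠ t := fun hh => ht hh.symm
    simp [this]
  · simp

lemma my_prob_le_marginal {τ σ : Type*} [Fintype τ] [DecidableEq τ] [DecidableEq σ]
    (hμ0 : ∀ ω, 0 ≤ μ ω) (f : τ → σ) (T : Ω → τ) (S : Ω → σ) (hS : ∀ ω, S ω = f (T ω)) (t : τ) :
    prob μ T t ≤ prob μ S (f t) := by
  rw [my_prob_comp μ f T S hS (f t)]
  have := Finset.single_le_sum (f := fun t' => if f t' = f t then prob μ T t' else 0)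
    (fun t' _ => by by_cases hft : f t' = f t <;> simp [hft, my_prob_nonneg μ hμ0 T])
    (Finset.mem_univ t)
  simpa using this

lemma my_ent_comp_eq {τ σ : Type*} [Fintype τ] [DecidableEq τ] [Fintype σ] [DecidableEq σ]
    (T : Ω → τ) (f : τ → σ) (S : Ω → σ) (hS : ∀ ω, S ω = f (T ω)) :
    ent μ S = ∑ t, -(prob μ T t * Real.log (prob μ S (f t))) := by
  unfold ent
  have key : ∀ s, Real.negMulLog (prob μ S s)
      = ∑ t, if f t = s then -(prob μ T t * Real.log (prob μ S s)) else 0 := by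
    intro s
    rw [Real.negMulLog]
    set L := Real.log (prob μ S s) with hL
    rw [my_prob_comp μ f T S hS s, neg_mul, Finset.sum_mul, ← Finset.sum_neg_distrib]
    refine Finset.sum_congr rfl fun t _ => ?_
    split <;> simp
  simp only [key]
  rw [Finset.sum_comm]
  refine Finset.sum_congr rfl fun t _ => ?_
  rw [Finset.sum_ite_eq Finset.univ (f t) (fun s => -(prob μ T t * Real.log (prob μ S s)))]
  simp

end Helpers

/-- Decomposition `η_j = −a'_j + c'_j + d'_j`: if `X' ⊥ D' | (X,D)`,
then `I(X';D) − I(X;D) = −I(X;D|X') + I(X';D'|X) + I(X';D|(X,D'))`. -/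
theorem statement8 {Ω : Type*} [Fintype Ω] (μ : Ω → ℝ)
    (hμ0 : ∀ ω, 0 ≤ μ ω) (hμ1 : ∑ ω, μ ω = 1)
    {α α' δ δ' : Type*} [Fintype α] [DecidableEq α] [Fintype α'] [DecidableEq α']
    [Fintype δ] [DecidableEq δ] [Fintype δ'] [DecidableEq δ']
    (X : Ω → α) (X' : Ω → α') (D : Ω → δ) (D' : Ω → δ')
    (h : CondIndep μ X' D' (fun ω => (X ω, D ω))) :
    mi μ X' D - mi μ X D
      = - cmi μ X D X' + cmi μ X' D' X + cmi μ X' D (fun ω => (X ω, D' ω)) := by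
  classical
  simp only [mi, cmi]
  rw [my_ent_comp_eq μ (fun ω => (X ω, X' ω, D ω, D' ω)) (fun q => q.2.1) X' (fun _ => rfl),
      my_ent_comp_eq μ (fun ω => (X ω, X' ω, D ω, D' ω)) (fun q => q.2.2.1) D (fun _ => rfl),
      my_ent_comp_eq μ (fun ω => (X ω, X' ω, D ω, D' ω)) (fun q => (q.2.1, q.2.2.1)) (fun ω => (X' ω, D ω)) (fun _ => rfl),
      my_ent_comp_eq μ (fun ω => (X ω, X' ω, D ω, D' ω)) (fun q => q.1) X (fun _ => rfl),
      my_ent_comp_eq μ (fun ω => (X ω, X' ω, D ω, D' ω)) (fun q => (q.1, q.2.2.1)) (fun ω => (X ω, D ω)) (fun _ => rfl),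
      my_ent_comp_eq μ (fun ω => (X ω, X' ω, D ω, D' ω)) (fun q => (q.1, q.2.1)) (fun ω => (X ω, X' ω)) (fun _ => rfl),
      my_ent_comp_eq μ (fun ω => (X ω, X' ω, D ω, D' ω)) (fun q => (q.2.2.1, q.2.1)) (fun ω => (D ω, X' ω)) (fun _ => rfl),
      my_ent_comp_eq μ (fun ω => (X ω, X' ω, D ω, D' ω)) (fun q => (q.1, q.2.2.1, q.2.1)) (fun ω => (X ω, D ω, X' ω)) (fun _ => rfl),
      my_ent_comp_eq μ (fun ω => (X ω, X' ω, D ω, D' ω)) (fun q => (q.2.1, q.1)) (fun ω => (X' ω, X ω)) (fun _ => rfl),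
      my_ent_comp_eq μ (fun ω => (X ω, X' ω, D ω, D' ω)) (fun q => (q.2.2.2, q.1)) (fun ω => (D' ω, X ω)) (fun _ => rfl),
      my_ent_comp_eq μ (fun ω => (X ω, X' ω, D ω, D' ω)) (fun q => (q.2.1, q.2.2.2, q.1)) (fun ω => (X' ω, D' ω, X ω)) (fun _ => rfl),
      my_ent_comp_eq μ (fun ω => (X ω, X' ω, D ω, D' ω)) (fun q => (q.2.1, (q.1, q.2.2.2))) (fun ω => (X' ω, (X ω, D' ω))) (fun _ => rfl),
      my_ent_comp_eq μ (fun ω => (X ω, X' ω, D ω, D' ω)) (fun q => (q.2.2.1, (q.1, q.2.2.2))) (fun ω => (D ω, (X ω, D' ω))) (fun _ => rfl),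
      my_ent_comp_eq μ (fun ω => (X ω, X' ω, D ω, D' ω)) (fun q => (q.2.1, q.2.2.1, (q.1, q.2.2.2))) (fun ω => (X' ω, D ω, (X ω, D' ω))) (fun _ => rfl),
      my_ent_comp_eq μ (fun ω => (X ω, X' ω, D ω, D' ω)) (fun q => (q.1, q.2.2.2)) (fun ω => (X ω, D' ω)) (fun _ => rfl)]
  simp only [← Finset.sum_neg_distrib, ← Finset.sum_sub_distrib, ← Finset.sum_add_distrib]
  refine Finset.sum_congr rfl fun q _ => ?_
  obtain ⟨x, x', d, d'⟩ := q
  dsimp only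
  by_cases hp : prob μ (fun ω => (X ω, X' ω, D ω, D' ω)) (x, x', d, d') = 0
  · simp [hp]
  · have hpq : 0 < prob μ (fun ω => (X ω, X' ω, D ω, D' ω)) (x, x', d, d') :=
      lt_of_le_of_ne (my_prob_nonneg μ hμ0 _ _) (Ne.symm hp)
    have e1 : prob μ (fun ω => (X' ω, X ω)) (x', x) = prob μ (fun ω => (X ω, X' ω)) (x, x') :=
      my_prob_congr μ _ _ _ _ (fun ω => by simp only [Prod.mk.injEq]; tauto)
    have e2 : prob μ (fun ω => (D ω, X' ω)) (d, x') = prob μ (fun ω => (X' ω, D ω)) (x', d) :=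
      my_prob_congr μ _ _ _ _ (fun ω => by simp only [Prod.mk.injEq]; tauto)
    have e3 : prob μ (fun ω => (X' ω, (X ω, D' ω))) (x', (x, d'))
        = prob μ (fun ω => (X' ω, D' ω, X ω)) (x', d', x) :=
      my_prob_congr μ _ _ _ _ (fun ω => by simp only [Prod.mk.injEq]; tauto)
    have e4 : prob μ (fun ω => (D' ω, X ω)) (d', x) = prob μ (fun ω => (X ω, D' ω)) (x, d') :=
      my_prob_congr μ _ _ _ _ (fun ω => by simp only [Prod.mk.injEq]; tauto)
    have e5 : prob μ (fun ω => (X' ω, D ω, (X ω, D' ω))) (x', d, (x, d'))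
        = prob μ (fun ω => (X ω, X' ω, D ω, D' ω)) (x, x', d, d') :=
      my_prob_congr μ _ _ _ _ (fun ω => by simp only [Prod.mk.injEq]; tauto)
    have hCI := h x' d' (x, d)
    have c1 : prob μ (fun ω => (X' ω, D' ω, (X ω, D ω))) (x', d', (x, d))
        = prob μ (fun ω => (X ω, X' ω, D ω, D' ω)) (x, x', d, d') :=
      my_prob_congr μ _ _ _ _ (fun ω => by simp only [Prod.mk.injEq]; tauto)
    have c2 : prob μ (fun ω => (X' ω, (X ω, D ω))) (x', (x, d))
        = prob μ (fun ω => (X ω, D ω, X' ω)) (x, d, x') :=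
      my_prob_congr μ _ _ _ _ (fun ω => by simp only [Prod.mk.injEq]; tauto)
    have c3 : prob μ (fun ω => (D' ω, (X ω, D ω))) (d', (x, d))
        = prob μ (fun ω => (D ω, (X ω, D' ω))) (d, (x, d')) :=
      my_prob_congr μ _ _ _ _ (fun ω => by simp only [Prod.mk.injEq]; tauto)
    rw [c1, c2, c3] at hCI
    have hC5 : 0 < prob μ (fun ω => (X ω, D ω)) (x, d) :=
      lt_of_lt_of_le hpq (my_prob_le_marginal μ hμ0 (fun q => (q.1, q.2.2.1))
        (fun ω => (X ω, X' ω, D ω, D' ω)) (fun ω => (X ω, D ω)) (fun _ => rfl) (x, x', d, d'))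
    have hprod : 0 < prob μ (fun ω => (X ω, D ω, X' ω)) (x, d, x')
        * prob μ (fun ω => (D ω, (X ω, D' ω))) (d, (x, d')) := by
      rw [← hCI]; exact mul_pos hpq hC5
    have hC8 : 0 < prob μ (fun ω => (X ω, D ω, X' ω)) (x, d, x') := by
      rcases (my_prob_nonneg μ hμ0 (fun ω => (X ω, D ω, X' ω)) (x, d, x')).lt_or_eq with hlt | heq
      · exact hlt
      · exfalso; rw [← heq] at hprod; simp at hprod
    have hC13 : 0 < prob μ (fun ω => (D ω, (X ω, D' ω))) (d, (x, d')) := by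
      rcases (my_prob_nonneg μ hμ0 (fun ω => (D ω, (X ω, D' ω))) (d, (x, d'))).lt_or_eq with hlt | heq
      · exact hlt
      · exfalso; rw [← heq] at hprod; simp at hprod
    have key : Real.log (prob μ (fun ω => (X ω, X' ω, D ω, D' ω)) (x, x', d, d'))
        + Real.log (prob μ (fun ω => (X ω, D ω)) (x, d))
        = Real.log (prob μ (fun ω => (X ω, D ω, X' ω)) (x, d, x'))
        + Real.log (prob μ (fun ω => (D ω, (X ω, D' ω))) (d, (x, d'))) := by
      rw [← Real.log_mul hp hC5.ne', hCI, Real.log_mul hC8.ne' hC13.ne']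
    rw [e1, e2, e3, e4, e5]
    linear_combination (-1 : ℝ) * (prob μ (fun ω => (X ω, X' ω, D ω, D' ω)) (x, x', d, d')) * key
end

section
/- Let X, X', Z be random variables taking values in finite types with everywhere strictly positive joint probability mass function p, and for each pair (x', z) let q(· | x', z) be a probability mass function on the value type of X with q(x | x', z) > 0 for all x. Then E[ exp{ −[ ln p(X | Z) − ln p(X' | Z) + ln( p(X' | X, Z) / q(X | X', Z) ) ] } ] = 1, where p(x|z), p(x'|z), p(x'|x,z) denote the conditional probability mass functions derived from the joint law. (Integral fluctuation relation for a subsystem with an arbitrary backward kernel q.) -/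
open scoped BigOperators

private lemma prob_sum_eq {Ω : Type*} [Fintype Ω] (μ : Ω → ℝ) {δ : Type*} [Fintype δ]
    [DecidableEq δ] (W : Ω → δ) : ∑ a, prob μ W a = ∑ ω, μ ω := by
  unfold prob
  rw [Finset.sum_comm]
  simp

private lemma sum_mul_prob {Ω : Type*} [Fintype Ω] (μ : Ω → ℝ) {δ : Type*} [Fintype δ]
    [DecidableEq δ] (W : Ω → δ) (g : δ → ℝ) :
    ∑ t, prob μ W t * g t = ∑ ω, μ ω * g (W ω) := by
  unfold prob
  simp_rw [Finset.sum_mul, ite_mul, zero_mul]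
  rw [Finset.sum_comm]
  simp

private lemma prob_le_prob {Ω : Type*} [Fintype Ω] (μ : Ω → ℝ) (h0 : ∀ ω, 0 ≤ μ ω)
    {δ ε : Type*} [DecidableEq δ] [DecidableEq ε]
    (W : Ω → δ) (V : Ω → ε) (t : δ) (s : ε) (h : ∀ ω, W ω = t → V ω = s) :
    prob μ W t ≤ prob μ V s := by
  apply Finset.sum_le_sum
  intro ω _
  by_cases hw : W ω = t
  · simp [hw, h ω hw]
  · simp only [hw, if_false]
    split_ifs <;> simp [h0 ω]

/-- Integral fluctuation relation for a subsystem with an arbitrary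
strictly positive backward kernel `q`:
`E[exp(−[ln p(X|Z) − ln p(X'|Z) + ln(p(X'|X,Z)/q(X|X',Z))])] = 1`. -/
theorem statement10 {Ω : Type*} [Fintype Ω] (μ : Ω → ℝ)
    (hμ0 : ∀ ω, 0 ≤ μ ω) (hμ1 : ∑ ω, μ ω = 1)
    {α β γ : Type*} [Fintype α] [DecidableEq α] [Fintype β] [DecidableEq β]
    [Fintype γ] [DecidableEq γ]
    (X : Ω → α) (X' : Ω → β) (Z : Ω → γ)
    (hpos : ∀ x x' z, 0 < prob μ (fun ω => (X ω, X' ω, Z ω)) (x, x', z))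
    (q : α → β → γ → ℝ) (hq0 : ∀ x x' z, 0 < q x x' z)
    (hq1 : ∀ x' z, ∑ x, q x x' z = 1) :
    ∑ ω, μ ω *
        Real.exp (-(Real.log (prob μ (fun ω' => (X ω', Z ω')) (X ω, Z ω) / prob μ Z (Z ω))
          - Real.log (prob μ (fun ω' => (X' ω', Z ω')) (X' ω, Z ω) / prob μ Z (Z ω))
          + Real.log ((prob μ (fun ω' => (X ω', X' ω', Z ω')) (X ω, X' ω, Z ω)
              / prob μ (fun ω' => (X ω', Z ω')) (X ω, Z ω))
            / q (X ω) (X' ω) (Z ω)))) = 1 := by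
  set W : Ω → α × β × γ := fun ω => (X ω, X' ω, Z ω) with hW
  have key : ∀ ω, μ ω *
        Real.exp (-(Real.log (prob μ (fun ω' => (X ω', Z ω')) (X ω, Z ω) / prob μ Z (Z ω))
          - Real.log (prob μ (fun ω' => (X' ω', Z ω')) (X' ω, Z ω) / prob μ Z (Z ω))
          + Real.log ((prob μ (fun ω' => (X ω', X' ω', Z ω')) (X ω, X' ω, Z ω)
              / prob μ (fun ω' => (X ω', Z ω')) (X ω, Z ω))
            / q (X ω) (X' ω) (Z ω))))
      = μ ω * (prob μ (fun ω' => (X' ω', Z ω')) (X' ω, Z ω) * q (X ω) (X' ω) (Z ω)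
          / prob μ (fun ω' => (X ω', X' ω', Z ω')) (X ω, X' ω, Z ω)) := by
    intro ω
    have hc : 0 < prob μ (fun ω' => (X ω', X' ω', Z ω')) (X ω, X' ω, Z ω) :=
      hpos (X ω) (X' ω) (Z ω)
    have ha : 0 < prob μ (fun ω' => (X ω', Z ω')) (X ω, Z ω) :=
      lt_of_lt_of_le hc (prob_le_prob μ hμ0 _ _ _ _ (by
        intro ω' h'; simp only [Prod.mk.injEq] at h' ⊢; exact ⟨h'.1, h'.2.2⟩))
    have hb : 0 < prob μ (fun ω' => (X' ω', Z ω')) (X' ω, Z ω) :=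
      lt_of_lt_of_le hc (prob_le_prob μ hμ0 _ _ _ _ (by
        intro ω' h'; simp only [Prod.mk.injEq] at h' ⊢; exact ⟨h'.2.1, h'.2.2⟩))
    have hz : 0 < prob μ Z (Z ω) :=
      lt_of_lt_of_le hc (prob_le_prob μ hμ0 _ _ _ _ (by
        intro ω' h'; simp only [Prod.mk.injEq] at h'; exact h'.2.2))
    have hqv : 0 < q (X ω) (X' ω) (Z ω) := hq0 _ _ _
    congr 1
    rw [show (-(Real.log (prob μ (fun ω' => (X ω', Z ω')) (X ω, Z ω) / prob μ Z (Z ω))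
          - Real.log (prob μ (fun ω' => (X' ω', Z ω')) (X' ω, Z ω) / prob μ Z (Z ω))
          + Real.log ((prob μ (fun ω' => (X ω', X' ω', Z ω')) (X ω, X' ω, Z ω)
              / prob μ (fun ω' => (X ω', Z ω')) (X ω, Z ω))
            / q (X ω) (X' ω) (Z ω))))
        = Real.log (prob μ (fun ω' => (X' ω', Z ω')) (X' ω, Z ω) * q (X ω) (X' ω) (Z ω)
          / prob μ (fun ω' => (X ω', X' ω', Z ω')) (X ω, X' ω, Z ω)) from ?_]
    · exact Real.exp_log (div_pos (mul_pos hb hqv) hc)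
    · rw [Real.log_div ha.ne' hz.ne', Real.log_div hb.ne' hz.ne',
        Real.log_div (div_pos hc ha).ne' hqv.ne', Real.log_div hc.ne' ha.ne',
        Real.log_div (mul_pos hb hqv).ne' hc.ne', Real.log_mul hb.ne' hqv.ne']
      ring
  rw [Finset.sum_congr rfl fun ω _ => key ω]
  have := sum_mul_prob μ W (fun t => prob μ (fun ω' => (X' ω', Z ω')) (t.2.1, t.2.2)
      * q t.1 t.2.1 t.2.2 / prob μ W t)
  rw [hW] at this
  rw [← this]
  have step : ∀ t : α × β × γ, prob μ W t * (prob μ (fun ω' => (X' ω', Z ω')) (t.2.1, t.2.2)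
      * q t.1 t.2.1 t.2.2 / prob μ W t)
      = prob μ (fun ω' => (X' ω', Z ω')) (t.2.1, t.2.2) * q t.1 t.2.1 t.2.2 := by
    intro ⟨x, x', z⟩
    rw [mul_comm, div_mul_cancel₀]
    exact (hpos x x' z).ne'
  rw [Finset.sum_congr rfl fun t _ => step t]
  rw [Fintype.sum_prod_type, Finset.sum_comm]
  have : ∀ p : β × γ, ∑ x : α, prob μ (fun ω' => (X' ω', Z ω')) (p.1, p.2) * q x p.1 p.2
      = prob μ (fun ω' => (X' ω', Z ω')) p := by
    intro p
    rw [← Finset.mul_sum, hq1 p.1 p.2, mul_one]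
  rw [Finset.sum_congr rfl fun p _ => this p, prob_sum_eq, hμ1]
end
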